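/- Let a, b, 𝒮, Y > 0 and define f : (0,∞) → ℝ by f(t) = 𝒮^{3/2}·[ ((a+bY)/2)·t² + (b·𝒮^{3/2}/4)·t⁴ − (1/6)·t⁶ ]. Then f attains its maximum on (0,∞) at the unique point t₀ determined by t₀² = (1/2)·[ b·𝒮^{3/2} + √(b²𝒮³ + 4(a+bY)) ], and for every t > 0 one has f(t) ≤ C(a,b,𝒮) + ((b²𝒮⁴ + 4a𝒮)^{3/2}/24)·[ (1 + (4b/(b²𝒮³+4a))·Y)^{3/2} − 1 ] + (b²𝒮³/4)·Y, where C(a,b,𝒮) := (a b 𝒮³)/4 + (b³𝒮⁶)/24 + ((b²𝒮⁴+4a𝒮)^{3/2})/24; moreover equality holds at t = t₀. -/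

import Mathlib

/-!
With `u = t²`, `E = 𝒮^{3/2}`, `A = a + bY` and `B = bE`, the function is `f(t) = E·p(t²)`
for the cubic `p(u) = A u/2 + B u²/4 - u³/6`, whose derivative `(A + B u - u²)/2` vanishes
at the positive root `u₀` of `u² = A + B u`. That relation gives the exact factorisation
`p(u₀) - p(u) = (u - u₀)² (u + 2u₀ - 3B/2)/6`, whose last factor is positive for `u ≥ 0`:
hence the maximum and its uniqueness. The same relation reduces `p(u₀)` to
`AB/4 + B³/24 + (B² + 4A)^{3/2}/24`, which is the stated bound once multiplied by `E`.
-/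

open Real

theorem rpow_three_halves_eq_sqrt_pow {x : ℝ} (hx : 0 ≤ x) :
    x ^ ((3 : ℝ) / 2) = √x ^ 3 := by
  rw [rpow_div_two_eq_sqrt 3 hx, ← rpow_natCast]
  norm_num

theorem rpow_three_halves_sq {x : ℝ} (hx : 0 ≤ x) : (x ^ ((3 : ℝ) / 2)) ^ 2 = x ^ 3 := by
  rw [rpow_three_halves_eq_sqrt_pow hx, ← pow_mul, mul_comm, pow_mul, sq_sqrt hx]

theorem mul_rpow_mul_one_add_div_rpow {x D c : ℝ} (p : ℝ) (hx : 0 ≤ x) (hD : 0 < D)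
    (hc : 0 ≤ D + c) : (x * D) ^ p * (1 + c / D) ^ p = x ^ p * (D + c) ^ p := by
  have hc' : 1 + c / D = (D + c) / D := by field_simp
  rw [hc', ← mul_rpow (by positivity) (by positivity), ← mul_rpow hx hc]
  congr 1
  field_simp

namespace CubicPotential

noncomputable def potential (A B u : ℝ) : ℝ := A / 2 * u + B / 4 * u ^ 2 - u ^ 3 / 6

noncomputable def criticalPoint (A B : ℝ) : ℝ := (B + √(B ^ 2 + 4 * A)) / 2

variable {A B : ℝ}

theorem criticalPoint_sq (h : 0 ≤ B ^ 2 + 4 * A) :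
    criticalPoint A B ^ 2 = A + B * criticalPoint A B := by
  unfold criticalPoint
  linear_combination (1 / 4 : ℝ) * sq_sqrt h

theorem abs_lt_sqrt_sq_add (hA : 0 < A) : |B| < √(B ^ 2 + 4 * A) :=
  abs_lt_of_sq_lt_sq (by rw [sq_sqrt (by positivity)]; linarith) (sqrt_nonneg _)

theorem potential_criticalPoint_sub (h : 0 ≤ B ^ 2 + 4 * A) (u : ℝ) :
    potential A B (criticalPoint A B) - potential A B u =
      (u - criticalPoint A B) ^ 2 * (u + 2 * criticalPoint A B - 3 * B / 2) / 6 := by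
  unfold potential
  linear_combination (u - criticalPoint A B) / 2 * criticalPoint_sq h

theorem add_two_criticalPoint_sub_pos (hA : 0 < A) {u : ℝ} (hu : 0 ≤ u) :
    0 < u + 2 * criticalPoint A B - 3 * B / 2 := by
  unfold criticalPoint
  linarith [le_abs_self B, neg_abs_le B, abs_lt_sqrt_sq_add (B := B) hA]

theorem potential_le_criticalPoint (hA : 0 < A) {u : ℝ} (hu : 0 ≤ u) :
    potential A B u ≤ potential A B (criticalPoint A B) := by
  have hdiff := potential_criticalPoint_sub (B := B) (by positivity : 0 ≤ B ^ 2 + 4 * A) u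
  have hfac := add_two_criticalPoint_sub_pos (B := B) hA hu
  nlinarith [mul_nonneg (sq_nonneg (u - criticalPoint A B)) hfac.le]

theorem eq_criticalPoint_of_le (hA : 0 < A) {u : ℝ} (hu : 0 ≤ u)
    (h : potential A B (criticalPoint A B) ≤ potential A B u) : u = criticalPoint A B := by
  have hdiff := potential_criticalPoint_sub (B := B) (by positivity : 0 ≤ B ^ 2 + 4 * A) u
  have hfac := add_two_criticalPoint_sub_pos (B := B) hA hu
  have hsq : (u - criticalPoint A B) ^ 2 ≤ 0 := by
    by_contra! hpos
    nlinarith [mul_pos hpos hfac]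
  nlinarith [sq_nonneg (u - criticalPoint A B)]

theorem potential_criticalPoint (h : 0 ≤ B ^ 2 + 4 * A) :
    potential A B (criticalPoint A B) =
      A * B / 4 + B ^ 3 / 24 + √(B ^ 2 + 4 * A) ^ 3 / 24 := by
  have hr : √(B ^ 2 + 4 * A) = 2 * criticalPoint A B - B := by unfold criticalPoint; ring
  rw [hr]
  unfold potential
  linear_combination (B / 4 - criticalPoint A B / 2) * criticalPoint_sq h

end CubicPotential

open CubicPotential in
theorem stmt3 (a b S Y : ℝ) (ha : 0 < a) (hb : 0 < b) (hS : 0 < S) (hY : 0 < Y) :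
    let f : ℝ → ℝ := fun t =>
      S ^ ((3 : ℝ) / 2) *
        ((a + b * Y) / 2 * t ^ 2 + b * S ^ ((3 : ℝ) / 2) / 4 * t ^ 4 - 1 / 6 * t ^ 6)
    let t₀ : ℝ :=
      Real.sqrt ((b * S ^ ((3 : ℝ) / 2) + Real.sqrt (b ^ 2 * S ^ 3 + 4 * (a + b * Y))) / 2)
    let C : ℝ := a * b * S ^ 3 / 4 + b ^ 3 * S ^ 6 / 24 +
      (b ^ 2 * S ^ 4 + 4 * a * S) ^ ((3 : ℝ) / 2) / 24
    let RHS : ℝ := C +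
      (b ^ 2 * S ^ 4 + 4 * a * S) ^ ((3 : ℝ) / 2) / 24 *
        ((1 + 4 * b / (b ^ 2 * S ^ 3 + 4 * a) * Y) ^ ((3 : ℝ) / 2) - 1) +
      b ^ 2 * S ^ 3 / 4 * Y
    0 < t₀ ∧
    t₀ ^ 2 = (b * S ^ ((3 : ℝ) / 2) + Real.sqrt (b ^ 2 * S ^ 3 + 4 * (a + b * Y))) / 2 ∧
    (∀ t : ℝ, 0 < t → f t ≤ f t₀) ∧
    (∀ t : ℝ, 0 < t → (∀ s : ℝ, 0 < s → f s ≤ f t) → t = t₀) ∧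
    (∀ t : ℝ, 0 < t → f t ≤ RHS) ∧
    f t₀ = RHS := by
  intro f t₀ C RHS
  set E := S ^ ((3 : ℝ) / 2)
  have hE : E ^ 2 = S ^ 3 := rpow_three_halves_sq hS.le
  have hEpos : 0 < E := by positivity
  set A := a + b * Y
  set B := b * E
  have hA : 0 < A := by positivity
  have hdisc : b ^ 2 * S ^ 3 + 4 * A = B ^ 2 + 4 * A := by rw [mul_pow, hE]
  have hf : ∀ t, f t = E * potential A B (t ^ 2) := fun t => by
    simp only [f, potential]; ring
  have ht₀ : t₀ ^ 2 = criticalPoint A B := by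
    rw [sq_sqrt (by positivity), criticalPoint, hdisc]
  have hmax : ∀ t, f t ≤ f t₀ := fun t => by
    rw [hf, hf, ht₀]
    exact mul_le_mul_of_nonneg_left (potential_le_criticalPoint hA (sq_nonneg t)) hEpos.le
  have hRHS : (b ^ 2 * S ^ 4 + 4 * a * S) ^ ((3 : ℝ) / 2) *
      (1 + 4 * b / (b ^ 2 * S ^ 3 + 4 * a) * Y) ^ ((3 : ℝ) / 2) =
        E * √(B ^ 2 + 4 * A) ^ 3 := by
    rw [show b ^ 2 * S ^ 4 + 4 * a * S = S * (b ^ 2 * S ^ 3 + 4 * a) by ring, div_mul_eq_mul_div,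
      mul_rpow_mul_one_add_div_rpow _ hS.le (by positivity) (by positivity),
      show b ^ 2 * S ^ 3 + 4 * a + 4 * b * Y = b ^ 2 * S ^ 3 + 4 * A by ring,
      rpow_three_halves_eq_sqrt_pow (x := b ^ 2 * S ^ 3 + 4 * A) (by positivity),
      hdisc]
  have hvalue : f t₀ = RHS := by
    rw [hf, ht₀, potential_criticalPoint (by positivity)]
    simp only [RHS, C]
    linear_combination (b * A / 4 + b ^ 3 * (E ^ 2 + S ^ 3) / 24) * hE - hRHS / 24
  refine ⟨sqrt_pos.2 (by positivity), sq_sqrt (by positivity), fun t _ => hmax t,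
    fun t ht htmax => ?_, fun t _ => hvalue ▸ hmax t, hvalue⟩
  have hle : potential A B (criticalPoint A B) ≤ potential A B (t ^ 2) := by
    rw [← ht₀, ← mul_le_mul_iff_of_pos_left hEpos, ← hf, ← hf]
    exact htmax t₀ (sqrt_pos.2 (by positivity))
  rw [← pow_left_inj₀ ht.le (sqrt_nonneg _) two_ne_zero, ht₀]
  exact eq_criticalPoint_of_le hA (sq_nonneg t) hle
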